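/- arXiv:1806.10047 — 5 statements merged into one kernel-verified Lean document; each statement's English description precedes it below -/
import Mathlib

section
/- Let n ≥ 2 and let T be a good n-tree. Then ¬¬(0 ∈ Cover(T)) holds. -/
/-- `ℕ∞`: decreasing binary sequences `ℕ → {0,1}`. -/
def DecSeq (α : ℕ → ℕ) : Prop := (∀ i, α i ≤ 1) ∧ ∀ i j, i ≤ j → α j ≤ α i

/-- The set `ℕ∞` as a type. -/
def NInf : Type := {α : ℕ → ℕ // DecSeq α}

/-- `n`-trees. -/
inductive NTree (n : ℕ) : Type where
  | nil : NTree n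
  | node : (Fin n → NTree n) → (Fin n → NInf) → NTree n

/-- Good `n`-trees. -/
inductive Good {n : ℕ} : NTree n → Prop where
  | nil : Good .nil
  | node {ts : Fin n → NTree n} {as : Fin n → NInf}
      (h1 : ∀ i j : Fin n, i ≠ j → ∀ k, max ((as i).val k) ((as j).val k) = 1)
      (h2 : ∀ i, (as i).val = (fun _ => 1) → Good (ts i)) :
      Good (.node ts as)

/-- Very good `n`-trees. -/
inductive VeryGood {n : ℕ} : NTree n → Prop where
  | nil : VeryGood .nil
  | node {ts : Fin n → NTree n} {as : Fin n → NInf}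
      (hg : Good (.node ts as)) (i : Fin n)
      (h1 : (as i).val = (fun _ => 1)) (hv : VeryGood (ts i)) :
      VeryGood (.node ts as)


/-- `0 ∈ Cover(T)`. -/
def CoverMem {n : ℕ} : NTree n → Prop
  | .nil => True
  | .node ts as => ∃ i, (as i).val = (fun _ => 1) ∧ CoverMem (ts i)


theorem not_not_cover_of_good (n : ℕ) (hn : 2 ≤ n) (T : NTree n) (hT : Good T) :
    ¬¬ CoverMem T := by
  intro hc
  apply hc
  clear hc
  induction hT with
  | nil => trivial
  | @node ts as h1 h2 ih =>
    -- at most one index can fail to be constantly 1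
    have key : ∀ i j : Fin n, (as i).val ≠ (fun _ => 1) → (as j).val ≠ (fun _ => 1) → i = j := by
      intro i j hi hj
      by_contra hij
      have hex : ∀ m : Fin n, (as m).val ≠ (fun _ => 1) → ∃ k, (as m).val k = 0 := by
        intro m hm
        by_contra hno
        push_neg at hno
        apply hm
        funext k
        have h1' := (as m).property.1 k
        have := hno k
        omega
      obtain ⟨k, hk⟩ := hex i hi
      obtain ⟨k', hk'⟩ := hex j hj
      have hik : (as i).val (max k k') = 0 := by
        have := (as i).property.2 k (max k k') (le_max_left _ _)
        omega
      have hjk : (as j).val (max k k') = 0 := by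
        have := (as j).property.2 k' (max k k') (le_max_right _ _)
        omega
      have := h1 i j hij (max k k')
      omega
    set i0 : Fin n := ⟨0, by omega⟩ with hi0
    set i1 : Fin n := ⟨1, by omega⟩ with hi1
    have hne : i0 ≠ i1 := by
      simp [hi0, hi1, Fin.ne_iff_vne]
    have hone : (as i0).val = (fun _ => 1) ∨ (as i1).val = (fun _ => 1) := by
      by_contra h
      push_neg at h
      exact hne (key i0 i1 h.1 h.2)
    rcases hone with h | h
    · exact ⟨i0, h, ih i0 h⟩
    · exact ⟨i1, h, ih i1 h⟩
end

section
/- Let n ≥ 2, let T be an n-tree, and let T_1, …, T_k be a list of n-trees. Then: (1) if T is good, then the double negation of 'T is very good' holds; (2) if it is false that T_i is very good for every 1 ≤ i ≤ k, then there is some 1 ≤ i ≤ k such that T_i is not good. -/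
/-!
Classically every good tree is very good, which gives both parts at once. At a good node take
two distinct indices `i ≠ j`: a decreasing binary sequence other than `1` vanishes from some
point on, so if neither `αᵢ` nor `αⱼ` were `1`, their join would vanish at a late enough index.
Hence some `αᵢ = 1`, and `Tᵢ` is good, so very good by induction.
-/

lemma NInf.eventually_eq_zero {α : NInf} (h : α.val ≠ fun _ => 1) :
    ∃ k, ∀ m, k ≤ m → α.val m = 0 := by
  obtain ⟨k, hk⟩ := Function.ne_iff.mp h
  refine ⟨k, fun m hm => ?_⟩
  have := α.2.2 k m hm
  have := α.2.1 k
  omega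

lemma NInf.eq_one_or_eq_one_of_max_eq_one {α β : NInf} (h : ∀ k, max (α.val k) (β.val k) = 1) :
    α.val = (fun _ => 1) ∨ β.val = (fun _ => 1) := by
  by_contra! hne
  obtain ⟨k, hk⟩ := NInf.eventually_eq_zero hne.1
  obtain ⟨l, hl⟩ := NInf.eventually_eq_zero hne.2
  have := h (max k l)
  rw [hk _ (le_max_left k l), hl _ (le_max_right k l)] at this
  exact absurd this (by decide)

lemma exists_eq_one_of_pairwise_max_eq_one {n : ℕ} (hn : 2 ≤ n) {as : Fin n → NInf}
    (h : ∀ i j : Fin n, i ≠ j → ∀ k, max ((as i).val k) ((as j).val k) = 1) :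
    ∃ i, (as i).val = fun _ => 1 :=
  (NInf.eq_one_or_eq_one_of_max_eq_one (h ⟨0, by omega⟩ ⟨1, hn⟩ (by simp [Fin.ext_iff]))).elim
    (⟨_, ·⟩) (⟨_, ·⟩)

theorem Good.veryGood {n : ℕ} (hn : 2 ≤ n) {T : NTree n} (hT : Good T) : VeryGood T := by
  induction hT with
  | nil => exact .nil
  | node hjoin hsub ih =>
    obtain ⟨i, hi⟩ := exists_eq_one_of_pairwise_max_eq_one hn hjoin
    exact .node (.node hjoin hsub) i hi (ih i hi)

theorem good_not_not_very_good_and_not_all_very_good_exists_not_good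
    (n : ℕ) (hn : 2 ≤ n) :
    (∀ T : NTree n, Good T → ¬¬ VeryGood T) ∧
    (∀ (k : ℕ) (Ts : Fin k → NTree n),
      ¬ (∀ i, VeryGood (Ts i)) → ∃ i, ¬ Good (Ts i)) := by
  refine ⟨fun T hT hnot => hnot (hT.veryGood hn), fun k Ts hnot => ?_⟩
  by_contra! hgood
  exact hnot fun i => (hgood i).veryGood hn
end

section
/- For i, j, k ∈ ℕ define α_{i,j}(k) = 0 if the i-th Turing machine on input i has halted by stage k with output j, and α_{i,j}(k) = 1 otherwise, so that each α_{i,j} ∈ ℕ∞. Then: (1) for every i and all j ≠ j', α_{i,j} ∨ α_{i,j'} = 1; and (2) for every n ≥ 2 there is no total computable function f : ℕ → ℕ with f(i) < n for all i such that α_{i, f(i)} = 1 (the constant-one sequence) for every i ∈ ℕ. (This is the computational core of the inconsistency of CZF + LLPO_n + CT_! + AC^{¬¬}_{ℕ,n}.) -/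
/-- `alpha i j k = 0` iff the `i`-th Turing machine, run on input `i`, has halted
by stage `k` with output `j` (via Mathlib's step-bounded evaluation of partial
recursive codes), and `1` otherwise. -/
def alpha (i j k : ℕ) : ℕ :=
  if Nat.Partrec.Code.evaln k (Denumerable.ofNat Nat.Partrec.Code i) i = some j
    then 0 else 1

theorem richman_diagonal :
    (∀ i j, DecSeq (alpha i j)) ∧
    (∀ i j j', j ≠ j' → ∀ k, max (alpha i j k) (alpha i j' k) = 1) ∧
    (∀ n, 2 ≤ n →
      ¬ ∃ f : ℕ → ℕ, Computable f ∧ (∀ i, f i < n) ∧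
          ∀ i, alpha i (f i) = (fun _ => 1)) := by
  refine ⟨?_, ?_, ?_⟩
  · intro i j
    constructor
    · intro k
      unfold alpha; split <;> simp
    · intro k l hkl
      unfold alpha
      split
      · simp
      · rename_i h
        split
        · rename_i h2
          exact absurd (Nat.Partrec.Code.evaln_mono hkl h2) h
        · exact le_refl 1
  · intro i j j' hjj k
    unfold alpha
    split
    · rename_i h1
      split
      · rename_i h2
        rw [h1] at h2
        exact absurd (Option.some_injective _ h2) hjj
      · simp
    · split <;> simp
  · rintro n - ⟨f, hf, -, hall⟩
    have hp : Nat.Partrec (fun n => Part.some (f n)) := Partrec.nat_iff.mp hf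
    obtain ⟨c, hc⟩ := Nat.Partrec.Code.exists_code.mp hp
    set i := Encodable.encode c with hi
    have hev : f i ∈ Nat.Partrec.Code.eval (Denumerable.ofNat Nat.Partrec.Code i) i := by
      rw [hi, Denumerable.ofNat_encode, hc]; simp
    obtain ⟨k, hk⟩ := Nat.Partrec.Code.evaln_complete.mp hev
    have := congrFun (hall i) k
    unfold alpha at this
    rw [if_pos (Option.mem_def.mp hk)] at this
    simp at this
end

section
/- Let n ≥ 2. Define F : (ℕ → ℕ) → (ℕ∞)^n by: (F(α))_i(k) = 0 if there is a least k' ≤ k with α(k') ≠ 0 and this α(k') is congruent to i modulo n+1, and (F(α))_i(k) = 1 otherwise (for 1 ≤ i ≤ n). Then F is a well-defined surjection from ℕ^ℕ onto the set {⟨α_1,…,α_n⟩ ∈ (ℕ∞)^n : α_i ∨ α_j = 1 for all i ≠ j}. -/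
/-- `(F(α))_i(k) = 0` if there is a least `k' ≤ k` with `α k' ≠ 0` and this value
`α k'` is congruent to `i` modulo `n + 1` (indices `i ∈ {1,…,n}` are represented by
`Fin n` via `i ↦ i.val + 1`), and `1` otherwise. -/
def Fmap (n : ℕ) (α : ℕ → ℕ) (i : Fin n) (k : ℕ) : ℕ :=
  if h : ∃ k', k' ≤ k ∧ α k' ≠ 0 then
    if α (Nat.find h) % (n + 1) = i.val + 1 then 0 else 1
  else 1

lemma Fmap_le_one (n : ℕ) (α : ℕ → ℕ) (i : Fin n) (k : ℕ) : Fmap n α i k ≤ 1 := by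
  unfold Fmap
  split
  · split <;> simp
  · exact le_refl 1

theorem Fmap_welldef_and_surjective (n : ℕ) (hn : 2 ≤ n) :
    (∀ (α : ℕ → ℕ) (i : Fin n), DecSeq (Fmap n α i)) ∧
    (∀ αs : Fin n → (ℕ → ℕ), (∀ i, DecSeq (αs i)) →
      (∀ i j, i ≠ j → ∀ k, max (αs i k) (αs j k) = 1) →
      ∃ α : ℕ → ℕ, ∀ i, Fmap n α i = αs i) := by
  constructor
  · intro α i
    refine ⟨fun k => Fmap_le_one n α i k, fun a b hab => ?_⟩
    by_cases ha : ∃ k', k' ≤ a ∧ α k' ≠ 0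
    · have hb : ∃ k', k' ≤ b ∧ α k' ≠ 0 :=
        ⟨Nat.find ha, le_trans (Nat.find_spec ha).1 hab, (Nat.find_spec ha).2⟩
      have h1 : Nat.find hb ≤ Nat.find ha :=
        Nat.find_le ⟨le_trans (Nat.find_spec ha).1 hab, (Nat.find_spec ha).2⟩
      have h2 : Nat.find ha ≤ Nat.find hb :=
        Nat.find_le ⟨le_trans h1 (Nat.find_spec ha).1, (Nat.find_spec hb).2⟩
      have hfind : Nat.find hb = Nat.find ha := le_antisymm h1 h2
      unfold Fmap
      rw [dif_pos ha, dif_pos hb, hfind]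
    · have : Fmap n α i a = 1 := by unfold Fmap; rw [dif_neg ha]
      rw [this]
      exact Fmap_le_one n α i b
  · intro αs hdec hmax
    classical
    -- at most one index ever takes value 0
    have huniq : ∀ (i j : Fin n) (a b : ℕ), αs i a = 0 → αs j b = 0 → i = j := by
      intro i j a b hia hjb
      by_contra hij
      rcases le_total a b with hab | hab
      · have hi : αs i b = 0 := Nat.le_zero.mp (hia ▸ (hdec i).2 a b hab)
        have := hmax i j hij b
        rw [hi, hjb] at this
        simp at this
      · have hj : αs j a = 0 := Nat.le_zero.mp (hjb ▸ (hdec j).2 b a hab)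
        have := hmax i j hij a
        rw [hia, hj] at this
        simp at this
    set α : ℕ → ℕ := fun k =>
      if h : ∃ i : Fin n, αs i k = 0 then (Classical.choose h).val + 1 else 0 with hαdef
    have hzero : ∀ k, α k ≠ 0 → ∃ i : Fin n, αs i k = 0 ∧ α k = i.val + 1 := by
      intro k hk
      rw [hαdef] at hk ⊢
      simp only at hk ⊢
      by_cases h : ∃ i : Fin n, αs i k = 0
      · exact ⟨Classical.choose h, Classical.choose_spec h, by rw [dif_pos h]⟩
      · exact absurd (by rw [dif_neg h]) hk
    have hval : ∀ (k : ℕ) (i : Fin n), αs i k = 0 → α k ≠ 0 := by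
      intro k i hik
      rw [hαdef]
      simp only
      rw [dif_pos ⟨i, hik⟩]
      exact Nat.succ_ne_zero _
    refine ⟨α, fun i => funext fun k => ?_⟩
    unfold Fmap
    by_cases h : ∃ k', k' ≤ k ∧ α k' ≠ 0
    · rw [dif_pos h]
      set m := Nat.find h with hm
      obtain ⟨hmk, hmne⟩ := Nat.find_spec h
      obtain ⟨j, hjm, hαm⟩ := hzero m hmne
      have hjlt : j.val + 1 < n + 1 := Nat.succ_lt_succ j.isLt
      have hmod : α m % (n + 1) = j.val + 1 := by
        rw [hαm]; exact Nat.mod_eq_of_lt hjlt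
      by_cases hij : j = i
      · subst hij
        rw [if_pos hmod]
        exact (Nat.le_zero.mp (hjm ▸ (hdec j).2 m k hmk)).symm
      · rw [if_neg (by rw [hmod]; intro hc; exact hij (Fin.ext (Nat.succ_injective hc)))]
        -- need αs i k = 1
        have hik : αs i k ≠ 0 := fun hc => hij (huniq j i m k hjm hc)
        have := (hdec i).1 k
        omega
    · rw [dif_neg h]
      have hik : αs i k ≠ 0 := fun hc => h ⟨k, le_refl k, hval k i hc⟩
      have := (hdec i).1 k
      omega
end

section
/- Let n ≥ 2 and let F : (ℕ → ℕ) → (ℕ∞)^n be defined by: (F(α))_i(k) = 0 if there is a least k' ≤ k with α(k') ≠ 0 and this α(k') is congruent to i modulo n+1, and (F(α))_i(k) = 1 otherwise (for 1 ≤ i ≤ n). Then there is no function G : (ℕ → ℕ) → {1, …, n} that is continuous with respect to the product topology on Baire space ℕ^ℕ (ℕ discrete) and satisfies (F(α))_{G(α)} = 1 for all α ∈ ℕ^ℕ. (This is the mathematical core of the inconsistency of LLPO_n with the continuity principles LCP and Cont(ℕ^ℕ, ℕ) + AC_{ℕ^ℕ,2}.) -/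
/-- There is no continuous selector `G` on Baire space (with the product topology,
`ℕ` discrete) picking for each `α` an index `G α` with `(F(α))_{G α} = 1`. -/
theorem no_continuous_selector (n : ℕ) (hn : 2 ≤ n) :
    ¬ ∃ G : (ℕ → ℕ) → Fin n, Continuous G ∧
        ∀ α : ℕ → ℕ, Fmap n α (G α) = (fun _ => 1) := by
  rintro ⟨G, hG, hsel⟩
  set i := G (fun _ => 0) with hi
  set β : ℕ → ℕ → ℕ := fun m k => if k = m then i.val + 1 else 0 with hβ
  have htend : Filter.Tendsto β Filter.atTop (nhds (fun _ => 0)) := by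
    rw [tendsto_pi_nhds]
    intro k
    have hev : ∀ᶠ m in Filter.atTop, (0 : ℕ) = β m k := by
      filter_upwards [Filter.eventually_gt_atTop k] with m hm
      simp [hβ, Nat.ne_of_lt hm]
    exact Filter.Tendsto.congr' hev tendsto_const_nhds
  have h2 : Filter.Tendsto (fun m => G (β m)) Filter.atTop (nhds i) :=
    (hG.tendsto _).comp htend
  have h3 : ∀ᶠ m in Filter.atTop, G (β m) = i := by
    rw [nhds_discrete] at h2
    exact h2.eventually (show ∀ᶠ x in pure i, x = i from Filter.eventually_pure.mpr rfl)
  obtain ⟨m, hm⟩ := h3.exists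
  have hβm : β m m = i.val + 1 := by simp [hβ]
  have hex : ∃ k', k' ≤ m ∧ β m k' ≠ 0 := ⟨m, le_refl m, by simp [hβ]⟩
  have hfind : Nat.find hex = m := by
    obtain ⟨hle, hne⟩ := Nat.find_spec hex
    by_contra hne2
    exact hne (if_neg hne2)
  have := congrFun (hsel (β m)) m
  rw [Fmap, dif_pos hex, hfind, hβm, hm] at this
  have hmod : (i.val + 1) % (n + 1) = i.val + 1 :=
    Nat.mod_eq_of_lt (by have := i.isLt; omega)
  rw [hmod, if_pos rfl] at this
  exact absurd this (by norm_num)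
end
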